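/- The conformance axioms are sound for the conformance precongruence: for all closed BCCSP processes p, q and every action a ∈ A, if I(p) ∩ I(q) = ∅ then a.p ⊑_CS a.(p + q), and (unconditionally) a.p + a.q ⊑_CS a.p. -/

import Mathlib

inductive Proc (A : Type) : Type
  | nil : Proc A
  | pre : A → Proc A → Proc A
  | add : Proc A → Proc A → Proc A

inductive Step {A : Type} : Proc A → A → Proc A → Prop
  | pre (a : A) (p : Proc A) : Step (.pre a p) a p
  | addL {p : Proc A} {a : A} {p' : Proc A} (q : Proc A) :
      Step p a p' → Step (.add p q) a p'
  | addR {q : Proc A} {a : A} {q' : Proc A} (p : Proc A) :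
      Step q a q' → Step (.add p q) a q'

/-- `initials p` is the set `I(p)` of actions that `p` can immediately perform. -/
def initials {A : Type} (p : Proc A) : Set A := {a | ∃ p', Step p a p'}

/-- `{Ar, Al, Abi}` is a partition of the action set `A` (cells may be empty). -/
def IsPartition {A : Type} (Ar Al Abi : Set A) : Prop :=
  (Ar ∪ Al ∪ Abi = Set.univ) ∧ Disjoint Ar Al ∧ Disjoint Ar Abi ∧ Disjoint Al Abi

/-- Covariant-contravariant simulation w.r.t. covariant actions `Ar`,
contravariant actions `Al` and bivariant actions `Abi`. -/
def IsCCSim {A : Type} (Ar Al Abi : Set A) (S : Proc A → Proc A → Prop) : Prop :=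
  ∀ p q, S p q →
    (∀ a ∈ Ar ∪ Abi, ∀ p', Step p a p' → ∃ q', Step q a q' ∧ S p' q') ∧
    (∀ a ∈ Al ∪ Abi, ∀ q', Step q a q' → ∃ p', Step p a p' ∧ S p' q')

/-- The covariant-contravariant simulation preorder `p ≲_CC q`. -/
def ccLe {A : Type} (Ar Al Abi : Set A) (p q : Proc A) : Prop :=
  ∃ S, IsCCSim Ar Al Abi S ∧ S p q

/-- Covariant-contravariant simulation equivalence `p ≡_CC q`. -/
def ccEq {A : Type} (Ar Al Abi : Set A) (p q : Proc A) : Prop :=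
  ccLe Ar Al Abi p q ∧ ccLe Ar Al Abi q p

/-- Conformance simulation. -/
def IsConfSim {A : Type} (R : Proc A → Proc A → Prop) : Prop :=
  ∀ p q, R p q →
    initials p ⊆ initials q ∧
    (∀ a q', Step q a q' → a ∈ initials p → ∃ p', Step p a p' ∧ R p' q')

/-- The conformance simulation preorder `p ≲_CS q`. -/
def csLe {A : Type} (p q : Proc A) : Prop := ∃ R, IsConfSim R ∧ R p q

/-- Conformance simulation equivalence `p ≡_CS q`. -/
def csEq {A : Type} (p q : Proc A) : Prop := csLe p q ∧ csLe q p

/-- The conformance precongruence `p ⊑_CS q`. -/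
def csPre {A : Type} (p q : Proc A) : Prop := csLe p q ∧ initials q ⊆ initials p

/-- Plain simulation. -/
def IsSim {A : Type} (S : Proc A → Proc A → Prop) : Prop :=
  ∀ p q, S p q → ∀ a p', Step p a p' → ∃ q', Step q a q' ∧ S p' q'

/-- The plain simulation preorder `p ≲_S q`. -/
def simLe {A : Type} (p q : Proc A) : Prop := ∃ S, IsSim S ∧ S p q

/-- Ready simulation. -/
def IsRSim {A : Type} (S : Proc A → Proc A → Prop) : Prop :=
  ∀ p q, S p q → initials p = initials q ∧
    (∀ a p', Step p a p' → ∃ q', Step q a q' ∧ S p' q')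

/-- The ready simulation preorder `p ≲_RS q`. -/
def rsLe {A : Type} (p q : Proc A) : Prop := ∃ S, IsRSim S ∧ S p q

/-- Ready conformance simulation: a conformance simulation that additionally
guarantees `I(q) ⊆ I(p)` for all related pairs. -/
def IsRCSim {A : Type} (R : Proc A → Proc A → Prop) : Prop :=
  IsConfSim R ∧ ∀ p q, R p q → initials q ⊆ initials p

/-- The ready conformance simulation preorder `p ≲_RCS q`. -/
def rcsLe {A : Type} (p q : Proc A) : Prop := ∃ R, IsRCSim R ∧ R p q

/-- Open BCCSP terms (with variables indexed by `ℕ`). -/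
inductive Term (A : Type) : Type
  | var : ℕ → Term A
  | nil : Term A
  | pre : A → Term A → Term A
  | add : Term A → Term A → Term A

/-- Closed substitution applied to an open term. -/
def Term.subst {A : Type} (σ : ℕ → Proc A) : Term A → Proc A
  | .var n => σ n
  | .nil => .nil
  | .pre a t => .pre a (t.subst σ)
  | .add s t => .add (s.subst σ) (t.subst σ)

/-- View a closed process as an (open) term. -/
def Proc.toTerm {A : Type} : Proc A → Term A
  | .nil => .nil
  | .pre a p => .pre a p.toTerm
  | .add p q => .add p.toTerm q.toTerm

/-- Inequational derivability (between closed processes) from a set `E` of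
inequations between open terms: the least relation containing all substitution
instances of `E` and closed under reflexivity, transitivity and the congruence
rules for prefixing and `+`. -/
inductive DerivLe {A : Type} (E : Set (Term A × Term A)) : Proc A → Proc A → Prop
  | ax (l r : Term A) (σ : ℕ → Proc A) : (l, r) ∈ E → DerivLe E (l.subst σ) (r.subst σ)
  | refl (p : Proc A) : DerivLe E p p
  | trans {p q r : Proc A} : DerivLe E p q → DerivLe E q r → DerivLe E p r
  | pre (a : A) {p q : Proc A} : DerivLe E p q → DerivLe E (.pre a p) (.pre a q)
  | add {p q r s : Proc A} : DerivLe E p q → DerivLe E r s → DerivLe E (.add p r) (.add q s)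

/-- Equational derivability (between closed processes) from a set `E` of
equations between open terms. -/
inductive DerivEq {A : Type} (E : Set (Term A × Term A)) : Proc A → Proc A → Prop
  | ax (l r : Term A) (σ : ℕ → Proc A) : (l, r) ∈ E → DerivEq E (l.subst σ) (r.subst σ)
  | refl (p : Proc A) : DerivEq E p p
  | symm {p q : Proc A} : DerivEq E p q → DerivEq E q p
  | trans {p q r : Proc A} : DerivEq E p q → DerivEq E q r → DerivEq E p r
  | pre (a : A) {p q : Proc A} : DerivEq E p q → DerivEq E (.pre a p) (.pre a q)
  | add {p q r s : Proc A} : DerivEq E p q → DerivEq E r s → DerivEq E (.add p r) (.add q s)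

/-- Substitution of (possibly open) terms for variables. -/
def Term.substT {A : Type} (σ : ℕ → Term A) : Term A → Term A
  | .var n => σ n
  | .nil => .nil
  | .pre a t => .pre a (t.substT σ)
  | .add s t => .add (s.substT σ) (t.substT σ)

/-- Equational derivability between open terms from a set `E` of equations. -/
inductive TDerivEq {A : Type} (E : Set (Term A × Term A)) : Term A → Term A → Prop
  | ax (l r : Term A) (σ : ℕ → Term A) : (l, r) ∈ E → TDerivEq E (l.substT σ) (r.substT σ)
  | refl (t : Term A) : TDerivEq E t t
  | symm {s t : Term A} : TDerivEq E s t → TDerivEq E t s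
  | trans {s t u : Term A} : TDerivEq E s t → TDerivEq E t u → TDerivEq E s u
  | pre (a : A) {s t : Term A} : TDerivEq E s t → TDerivEq E (.pre a s) (.pre a t)
  | add {s t u v : Term A} : TDerivEq E s t → TDerivEq E u v → TDerivEq E (.add s u) (.add t v)

/-- The bisimulation axioms B1–B4, as equations. -/
def BEqns (A : Type) : Set (Term A × Term A) :=
  { (.add (.var 0) (.var 1), .add (.var 1) (.var 0)),
    (.add (.add (.var 0) (.var 1)) (.var 2), .add (.var 0) (.add (.var 1) (.var 2))),
    (.add (.var 0) (.var 0), .var 0),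
    (.add (.var 0) .nil, .var 0) }

/-- The bisimulation axioms B1–B4, each used as two inequations. -/
def BIneqs (A : Type) : Set (Term A × Term A) := BEqns A ∪ Prod.swap '' BEqns A

/-!
Each inequation needs only one unfolding of the conformance-simulation clauses, closed off by
reflexivity of `≲_CS`. In `a.p ≲_CS a.(p + q)` the moves of `p + q` coming from `q` are
never challenged, because the challenge must be an initial action of `p`; the prefix `a` then
makes the initial sets equal, as `⊑_CS` demands.
-/

theorem initials_pre {A : Type} (a : A) (p : Proc A) : initials (.pre a p) = {a} := by
  ext b
  constructor
  · rintro ⟨p', h⟩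
    cases h
    rfl
  · rintro rfl
    exact ⟨p, .pre _ p⟩

theorem initials_subset_initials_add {A : Type} (p q : Proc A) :
    initials p ⊆ initials (.add p q) :=
  fun _ ⟨p', h⟩ => ⟨p', .addL q h⟩

theorem isConfSim_eq {A : Type} : IsConfSim (@Eq (Proc A)) := by
  rintro p _ rfl
  exact ⟨subset_rfl, fun _ p' h _ => ⟨p', h, rfl⟩⟩

theorem csLe_refl {A : Type} (p : Proc A) : csLe p p := ⟨Eq, isConfSim_eq, rfl⟩

/-- Coinduction up to `≲_CS`: the witnessing relation is `≲_CS` together with the pair `(p, q)`. -/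
theorem csLe_of_forall_step {A : Type} {p q : Proc A} (hI : initials p ⊆ initials q)
    (hstep : ∀ a q', Step q a q' → a ∈ initials p → ∃ p', Step p a p' ∧ csLe p' q') :
    csLe p q := by
  refine ⟨fun x y => (x = p ∧ y = q) ∨ csLe x y, ?_, .inl ⟨rfl, rfl⟩⟩
  rintro x y (⟨rfl, rfl⟩ | ⟨R, hR, hxy⟩)
  · refine ⟨hI, fun a q' h ha => ?_⟩
    obtain ⟨p', hp', hle⟩ := hstep a q' h ha
    exact ⟨p', hp', .inr hle⟩
  · refine ⟨(hR x y hxy).1, fun a y' h ha => ?_⟩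
    obtain ⟨x', hx', hR'⟩ := (hR x y hxy).2 a y' h ha
    exact ⟨x', hx', .inr ⟨R, hR, hR'⟩⟩

theorem csLe_add_of_disjoint {A : Type} {p q : Proc A}
    (h : Disjoint (initials p) (initials q)) : csLe p (.add p q) := by
  refine csLe_of_forall_step (initials_subset_initials_add p q) fun a r hstep ha => ?_
  cases hstep with
  | addL _ hp => exact ⟨r, hp, csLe_refl r⟩
  | addR _ hq => exact absurd ⟨r, hq⟩ (h.notMem_of_mem_left ha)

theorem csLe_add_of_initials_subset {A : Type} {p q : Proc A}
    (h : initials q ⊆ initials p) : csLe (.add p q) p := by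
  refine csLe_of_forall_step ?_ fun a p' hstep _ => ⟨p', .addL q hstep, csLe_refl p'⟩
  rintro a ⟨r, hstep⟩
  cases hstep with
  | addL _ hp => exact ⟨r, hp⟩
  | addR _ hq => exact h ⟨r, hq⟩

theorem csPre_pre_of_csLe {A : Type} (a : A) {p q : Proc A} (h : csLe p q) :
    csPre (.pre a p) (.pre a q) := by
  refine ⟨csLe_of_forall_step ?_ fun b q' hstep _ => ?_, ?_⟩
  · rw [initials_pre, initials_pre]
  · cases hstep
    exact ⟨p, .pre a p, h⟩
  · rw [initials_pre, initials_pre]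

theorem csPre_add_of_initials_subset {A : Type} {p q : Proc A}
    (h : initials q ⊆ initials p) : csPre (.add p q) p :=
  ⟨csLe_add_of_initials_subset h, initials_subset_initials_add p q⟩

/-- Soundness of the conformance axioms for `⊑_CS`: if `I(p) ∩ I(q) = ∅` then
`a.p ⊑_CS a.(p + q)`, and unconditionally `a.p + a.q ⊑_CS a.p`. -/
theorem cs_axioms_sound {A : Type} (a : A) (p q : Proc A) :
    (initials p ∩ initials q = ∅ → csPre (Proc.pre a p) (.pre a (.add p q))) ∧
    csPre (Proc.add (.pre a p) (.pre a q)) (.pre a p) := by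
  refine ⟨fun h => csPre_pre_of_csLe a (csLe_add_of_disjoint ?_), ?_⟩
  · exact Set.disjoint_iff_inter_eq_empty.mpr h
  · apply csPre_add_of_initials_subset
    rw [initials_pre, initials_pre]
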